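/- arXiv:1602.05279 — 4 statements merged into one kernel-verified Lean document; each statement's English description precedes it below -/
import Mathlib

section
/- For every real number k one has (k+1)^4 − 2k^4 + (k−1)^4 = 12k^2 + 2, and the double series ∑_{n=1}^∞ ∑_{i=0}^{2^{n−1}−1} (6(2i+1)^2 + 1)/2^{5n} converges with sum 1/2 − ∫_0^1 x^4 dx = 3/10. -/
/-! The `n`-th step of the exhaustion adds the triangles at the `2 ^ n` odd indices
`k = 2 i + 1 < 2 ^ (n + 1)`. Since `∑_{i < N} (6 (2 i + 1) ^ 2 + 1) = 8 N ^ 3 - N`, the step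
contributes `(1/4) ^ (n + 1) - (1/16) ^ (n + 1) / 2`, so the series is a difference of two
geometric series, with sum `1/3 - 1/30 = 3/10 = 1/2 - ∫₀¹ x ^ 4`. -/

open Finset

lemma sum_range_six_mul_odd_sq_add_one (N : ℕ) :
    ∑ i ∈ range N, (6 * (2 * (i : ℝ) + 1) ^ 2 + 1) = 8 * (N : ℝ) ^ 3 - N := by
  induction N with
  | zero => simp
  | succ N ih =>
    rw [sum_range_succ, ih]
    push_cast
    ring

lemma exhaustion_step_eq (n : ℕ) :
    ∑ i ∈ range (2 ^ n), (6 * (2 * (i : ℝ) + 1) ^ 2 + 1) / 2 ^ (5 * (n + 1)) =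
      (1 / 4) ^ (n + 1) - (1 / 16) ^ (n + 1) / 2 := by
  rw [← sum_div, sum_range_six_mul_odd_sq_add_one, one_div_pow, one_div_pow,
    show (4 : ℝ) = 2 ^ 2 by norm_num, show (16 : ℝ) = 2 ^ 4 by norm_num, ← pow_mul, ← pow_mul]
  push_cast
  field_simp
  ring

lemma hasSum_pow_succ {r : ℝ} (hr : |r| < 1) : HasSum (fun n : ℕ => r ^ (n + 1)) (r / (1 - r)) := by
  simpa only [pow_succ', div_eq_mul_inv] using (hasSum_geometric_of_abs_lt_one hr).mul_left r

theorem exhaustion_quartic :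
    (∀ k : ℝ, (k + 1) ^ 4 - 2 * k ^ 4 + (k - 1) ^ 4 = 12 * k ^ 2 + 2) ∧
    HasSum (fun n : ℕ => ∑ i ∈ Finset.range (2 ^ n),
        (6 * (2 * (i : ℝ) + 1) ^ 2 + 1) / 2 ^ (5 * (n + 1)))
      (1 / 2 - ∫ x in (0:ℝ)..1, x ^ 4) ∧
    1 / 2 - (∫ x in (0:ℝ)..1, x ^ 4) = 3 / 10 := by
  have harea : 1 / 2 - (∫ x in (0:ℝ)..1, x ^ 4) = 3 / 10 := by norm_num [integral_pow]
  refine ⟨fun k => by ring, ?_, harea⟩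
  rw [harea, funext exhaustion_step_eq]
  have h4 := hasSum_pow_succ (r := 1 / 4) (by norm_num [abs_of_pos])
  have h16 := hasSum_pow_succ (r := 1 / 16) (by norm_num [abs_of_pos])
  rw [show (3 / 10 : ℝ) = 1 / 4 / (1 - 1 / 4) - 1 / 16 / (1 - 1 / 16) / 2 by norm_num]
  exact h4.sub (h16.div_const 2)
end

section
/- Fix natural numbers s and k with 2 ≤ k ≤ s. The number of families S of subsets of a labeled s-element set such that: S has exactly 2 members, the union of the members of S is the whole set, no proper subfamily of S covers the whole set (i.e., S is a minimal cover), and exactly k elements belong to exactly one member of S, equals C(s,k)·(2^{k−1} − 1). -/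
/-!
Since `A ∪ B` is the whole set, a two-member cover `{A, B}` is recorded by the complements
`Aᶜ` and `Bᶜ`: they are disjoint, minimality says both are nonempty, and their union is the
set of uniquely covered points. An ordered such pair with `|Aᶜ ∪ Bᶜ| = k` is a `k`-set `U`
together with a nonempty proper subset of `U`, so there are `C(s,k) (2^k - 2)` of them, and
every family arises from exactly two ordered pairs.
-/

open Finset

variable {α : Type*}

def IsCover (S : Finset (Finset α)) : Prop := ∀ x, ∃ A ∈ S, x ∈ A

lemma IsCover.mono {S T : Finset (Finset α)} (hST : S ⊆ T) (hS : IsCover S) : IsCover T :=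
  fun x => (hS x).imp fun _ hA => ⟨hST hA.1, hA.2⟩

lemma isCover_singleton [Fintype α] {A : Finset α} : IsCover {A} ↔ A = univ := by
  simp [IsCover, eq_univ_iff_forall]

section

variable [Fintype α] [DecidableEq α]

instance (S : Finset (Finset α)) : Decidable (IsCover S) :=
  inferInstanceAs (Decidable (∀ x, ∃ A ∈ S, x ∈ A))

lemma isCover_pair {A B : Finset α} : IsCover {A, B} ↔ Disjoint Aᶜ Bᶜ := by
  simp only [IsCover, mem_insert, mem_singleton, exists_eq_or_imp, exists_eq_left]
  simp [disjoint_left, or_iff_not_imp_left]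

omit [Fintype α] in
lemma forall_ssubset_not_isCover_iff {S : Finset (Finset α)} :
    (∀ T ⊂ S, ¬IsCover T) ↔ ∀ A ∈ S, ¬IsCover (S.erase A) := by
  refine ⟨fun h A hA => h _ (erase_ssubset hA), fun h T hTS hT => ?_⟩
  obtain ⟨A, hAS, hAT⟩ := exists_of_ssubset hTS
  exact h A hAS (hT.mono (subset_erase.2 ⟨hTS.subset, hAT⟩))

lemma forall_ssubset_pair_not_isCover_iff {A B : Finset α} (hAB : A ≠ B) :
    (∀ T ⊂ {A, B}, ¬IsCover T) ↔ Aᶜ.Nonempty ∧ Bᶜ.Nonempty := by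
  simp only [forall_ssubset_not_isCover_iff, forall_mem_insert, mem_singleton, forall_eq,
    erase_insert (notMem_singleton.2 hAB), erase_insert_of_ne hAB,
    erase_singleton, insert_empty, isCover_singleton, nonempty_iff_ne_empty, Ne, compl_eq_empty_iff]
  exact and_comm

def uniquelyCovered (S : Finset (Finset α)) : Finset α :=
  univ.filter fun x => (S.filter fun A => x ∈ A).card = 1

lemma uniquelyCovered_pair {A B : Finset α} (hAB : A ≠ B) :
    uniquelyCovered {A, B} = symmDiff A B := by
  ext x
  rw [uniquelyCovered, mem_filter, filter_insert, filter_singleton, mem_symmDiff]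
  by_cases hA : x ∈ A <;> by_cases hB : x ∈ B <;> simp [hA, hB, card_insert_of_notMem, hAB]

variable (α) in
def minimalTwoCovers (k : ℕ) : Finset (Finset (Finset α)) :=
  univ.filter fun S =>
    S.card = 2 ∧ IsCover S ∧ (∀ T ⊂ S, ¬IsCover T) ∧ (uniquelyCovered S).card = k

variable (α) in
def disjointNonemptyPairs (k : ℕ) : Finset (Finset α × Finset α) :=
  univ.filter fun p => Disjoint p.1 p.2 ∧ p.1.Nonempty ∧ p.2.Nonempty ∧ (p.1 ∪ p.2).card = k

lemma ne_of_mem_disjointNonemptyPairs {k : ℕ} {p : Finset α × Finset α}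
    (hp : p ∈ disjointNonemptyPairs α k) : p.1 ≠ p.2 := by
  obtain ⟨hdisj, hne, -⟩ := (mem_filter.1 hp).2
  rintro h
  exact hne.ne_empty (disjoint_self.1 (h ▸ hdisj))

lemma pair_mem_minimalTwoCovers_iff {k : ℕ} {A B : Finset α} :
    {A, B} ∈ minimalTwoCovers α k ↔ (Aᶜ, Bᶜ) ∈ disjointNonemptyPairs α k := by
  by_cases hAB : A = B
  · subst hAB
    exact iff_of_false (by simp [minimalTwoCovers]) fun h => ne_of_mem_disjointNonemptyPairs h rfl
  simp only [minimalTwoCovers, disjointNonemptyPairs, mem_filter, mem_univ, true_and,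
    and_assoc, card_pair hAB, isCover_pair, forall_ssubset_pair_not_isCover_iff hAB,
    uniquelyCovered_pair hAB]
  rw [← compl_symmDiff_compl]
  refine and_congr_right fun hdisj => ?_
  rw [hdisj.symmDiff_eq_sup, sup_eq_union]

omit [Fintype α] in
lemma exists_eq_pair_of_card_eq_two {S : Finset α} {A : α} (hS : S.card = 2) (hA : A ∈ S) :
    ∃ B, A ≠ B ∧ S = {A, B} := by
  obtain ⟨B, hB⟩ := card_eq_one.1 (by rw [card_erase_of_mem hA, hS] : (S.erase A).card = 1)
  refine ⟨B, fun h => ?_, by rw [← hB, insert_erase hA]⟩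
  simpa [h] using hB.ge (mem_singleton_self B)

variable (α) in
lemma two_mul_card_minimalTwoCovers (k : ℕ) :
    2 * (minimalTwoCovers α k).card = (disjointNonemptyPairs α k).card := by
  have hsigma : ((minimalTwoCovers α k).sigma id).card = 2 * (minimalTwoCovers α k).card := by
    rw [card_sigma, sum_const_nat fun S hS => (mem_filter.1 hS).2.1, mul_comm]
  rw [← hsigma]
  refine (card_bij (fun (p : Finset α × Finset α) _ =>
    (⟨{p.1ᶜ, p.2ᶜ}, p.1ᶜ⟩ : Σ _ : Finset (Finset α), Finset α)) ?_ ?_ ?_).symm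
  · intro p hp
    rw [mem_sigma, pair_mem_minimalTwoCovers_iff, compl_compl, compl_compl]
    exact ⟨hp, mem_insert_self _ _⟩
  · rintro ⟨P, Q⟩ hPQ ⟨P', Q'⟩ hPQ' h
    obtain ⟨hpair, hP⟩ := Sigma.mk.inj_iff.1 h
    obtain rfl := compl_injective (eq_of_heq hP)
    have hQ : Qᶜ ∈ ({Pᶜ, Q'ᶜ} : Finset _) :=
      hpair ▸ mem_insert_of_mem (mem_singleton_self _)
    have hne : Qᶜ ≠ Pᶜ := fun h =>
      ne_of_mem_disjointNonemptyPairs hPQ (compl_injective h).symm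
    rw [mem_insert, mem_singleton, or_iff_right hne] at hQ
    rw [compl_injective hQ]
  · rintro ⟨S, A⟩ hSA
    obtain ⟨hS, hA : A ∈ S⟩ := mem_sigma.1 hSA
    obtain ⟨B, hAB, rfl⟩ := exists_eq_pair_of_card_eq_two (mem_filter.1 hS).2.1 hA
    exact ⟨(Aᶜ, Bᶜ), pair_mem_minimalTwoCovers_iff.1 hS, by simp⟩

omit [Fintype α] in
lemma card_powerset_erase_empty_erase_self (U : Finset α) :
    ((U.powerset.erase ∅).erase U).card = 2 ^ U.card - 2 := by
  rcases U.eq_empty_or_nonempty with rfl | hU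
  · simp
  · rw [card_erase_of_mem (mem_erase.2 ⟨hU.ne_empty, mem_powerset_self U⟩),
      card_erase_of_mem (empty_mem_powerset U), card_powerset]
    omega

variable (α) in
lemma card_disjointNonemptyPairs (k : ℕ) :
    (disjointNonemptyPairs α k).card = (Fintype.card α).choose k * (2 ^ k - 2) := by
  have hsplit : (disjointNonemptyPairs α k).card =
      ((powersetCard k univ).sigma fun U : Finset α => (U.powerset.erase ∅).erase U).card := by
    refine card_nbij' (fun p => ⟨p.1 ∪ p.2, p.1⟩) (fun q => (q.2, q.1 \ q.2)) ?_ ?_ ?_ ?_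
    · rintro ⟨P, Q⟩ hPQ
      obtain ⟨hdisj, hP, hQ, hk⟩ := (mem_filter.1 hPQ).2
      have hPU : P ≠ P ∪ Q := fun h =>
        hQ.ne_empty (disjoint_self.1 (hdisj.mono_left (h ▸ subset_union_right)))
      simp [mem_powersetCard, hk, hPU, hP.ne_empty]
    · rintro ⟨U, P⟩ hUP
      obtain ⟨⟨-, hk⟩, hPU, hP, hPsub⟩ := by
        simpa only [mem_coe, mem_sigma, mem_powersetCard, mem_erase, mem_powerset] using hUP
      refine mem_filter.2 ⟨mem_univ _, disjoint_sdiff, nonempty_iff_ne_empty.2 hP,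
        sdiff_nonempty.2 fun h => hPU (hPsub.antisymm h), ?_⟩
      rw [union_sdiff_of_subset hPsub, hk]
    · rintro ⟨P, Q⟩ hPQ
      simp only [union_sdiff_cancel_left (mem_filter.1 hPQ).2.1]
    · rintro ⟨U, P⟩ hUP
      simp only [union_sdiff_of_subset (mem_powerset.1 (mem_of_mem_erase (mem_of_mem_erase
        (mem_sigma.1 hUP).2)))]
  rw [hsplit, card_sigma, sum_const_nat fun U hU => by
      rw [card_powerset_erase_empty_erase_self, (mem_powersetCard.1 hU).2],
    card_powersetCard, card_univ]

end

lemma two_pow_sub_two (k : ℕ) : 2 ^ k - 2 = 2 * (2 ^ (k - 1) - 1) := by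
  cases k with
  | zero => rfl
  | succ k => rw [pow_succ, Nat.add_sub_cancel]; omega

theorem minimal_two_covers_count_general (s k : ℕ) :
    (Finset.univ.filter (fun S : Finset (Finset (Fin s)) =>
        S.card = 2 ∧
        (∀ x : Fin s, ∃ A ∈ S, x ∈ A) ∧
        (∀ T : Finset (Finset (Fin s)), T ⊂ S → ¬ (∀ x : Fin s, ∃ A ∈ T, x ∈ A)) ∧
        (Finset.univ.filter
          (fun x : Fin s => (S.filter (fun A => x ∈ A)).card = 1)).card = k)).card
      = s.choose k * (2 ^ (k - 1) - 1) := by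
  have h := two_mul_card_minimalTwoCovers (Fin s) k
  rw [card_disjointNonemptyPairs, Fintype.card_fin, two_pow_sub_two, mul_left_comm] at h
  have hcount := Nat.eq_of_mul_eq_mul_left two_pos h
  unfold minimalTwoCovers IsCover uniquelyCovered at hcount
  -- over `Fin s` the statement's decidability instances are not the generic ones
  convert hcount

theorem minimal_two_covers_count (s k : ℕ) (hk2 : 2 ≤ k) (hks : k ≤ s) :
    (Finset.univ.filter (fun S : Finset (Finset (Fin s)) =>
        S.card = 2 ∧
        (∀ x : Fin s, ∃ A ∈ S, x ∈ A) ∧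
        (∀ T : Finset (Finset (Fin s)), T ⊂ S → ¬ (∀ x : Fin s, ∃ A ∈ T, x ∈ A)) ∧
        (Finset.univ.filter
          (fun x : Fin s => (S.filter (fun A => x ∈ A)).card = 1)).card = k)).card
      = s.choose k * (2 ^ (k - 1) - 1) :=
  minimal_two_covers_count_general s k
end

section
/- For every natural number s ≥ 1, the double series ∑_{n=1}^∞ ∑_{x=0}^{2^{n−1}−1} ((2x+2)^s − 2(2x+1)^s + (2x)^s)/2^{n(s+1)} converges and its sum equals 1 − 2·∫_0^1 t^s dt = (s−1)/(s+1). -/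
open Finset Filter Topology

private lemma sum_range_double (f : ℕ → ℝ) (N : ℕ) :
    ∑ k ∈ Finset.range (2 * N), f k
      = ∑ x ∈ Finset.range N, (f (2 * x) + f (2 * x + 1)) := by
  induction N with
  | zero => simp
  | succ n ih =>
    rw [Nat.mul_succ, Finset.sum_range_succ, Finset.sum_range_succ,
      Finset.sum_range_succ, ih]
    ring

private lemma sum_pow_le (s m : ℕ) :
    (∑ k ∈ Finset.range m, (k : ℝ) ^ s) ≤ (m : ℝ) ^ (s + 1) / (s + 1) := by
  have hmono : MonotoneOn (fun x : ℝ => x ^ s) (Set.Icc (0:ℝ) (0 + m)) := by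
    intro a ha b hb hab
    exact pow_le_pow_left₀ ha.1 hab s
  have := hmono.sum_le_integral
  simp only [zero_add] at this
  calc (∑ k ∈ Finset.range m, (k : ℝ) ^ s)
      ≤ ∫ x in (0:ℝ)..(m:ℝ), x ^ s := this
    _ = (m : ℝ) ^ (s + 1) / (s + 1) := by
        rw [integral_pow]; simp

private lemma le_sum_pow (s m : ℕ) :
    (m : ℝ) ^ (s + 1) / (s + 1)
      ≤ (∑ k ∈ Finset.range m, (k : ℝ) ^ s) + (m : ℝ) ^ s := by
  have hmono : MonotoneOn (fun x : ℝ => x ^ s) (Set.Icc (0:ℝ) (0 + m)) := by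
    intro a ha b hb hab
    exact pow_le_pow_left₀ ha.1 hab s
  have h1 := hmono.integral_le_sum
  simp only [zero_add] at h1
  have h2 : (∑ i ∈ Finset.range m, (((i + 1 : ℕ)) : ℝ) ^ s)
      ≤ (∑ k ∈ Finset.range m, (k : ℝ) ^ s) + (m : ℝ) ^ s := by
    have h3 : ∑ i ∈ Finset.range (m + 1), ((i : ℕ) : ℝ) ^ s
        = (∑ i ∈ Finset.range m, (((i + 1 : ℕ)) : ℝ) ^ s) + ((0:ℝ)) ^ s := by
      rw [Finset.sum_range_succ']; norm_num
    have h4 : ∑ i ∈ Finset.range (m + 1), ((i : ℕ) : ℝ) ^ s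
        = (∑ k ∈ Finset.range m, (k : ℝ) ^ s) + (m : ℝ) ^ s := by
      rw [Finset.sum_range_succ]
    nlinarith [pow_nonneg (le_refl (0:ℝ)) s]
  calc (m : ℝ) ^ (s + 1) / (s + 1)
      = ∫ x in (0:ℝ)..(m:ℝ), x ^ s := by rw [integral_pow]; simp
    _ ≤ _ := le_trans h1 h2

/-- Partial Riemann-type sum `∑_{k<m} k^s`. -/
private noncomputable def pT (s m : ℕ) : ℝ := ∑ k ∈ Finset.range m, (k : ℝ) ^ s

/-- Telescoping auxiliary sequence. -/
private noncomputable def vA (s n : ℕ) : ℝ := 2 * (pT s (2 ^ n) / 2 ^ (n * (s + 1))) + (1/2 : ℝ) ^ n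

private lemma key_identity (s : ℕ) (hs : 1 ≤ s) (n : ℕ) :
    (∑ x ∈ Finset.range (2 ^ n),
      ((2 * (x : ℝ) + 2) ^ s - 2 * (2 * (x : ℝ) + 1) ^ s + (2 * (x : ℝ)) ^ s)
        / 2 ^ ((n + 1) * (s + 1))) = vA s n - vA s (n + 1) := by
  have hs0 : s ≠ 0 := by omega
  set N := 2 ^ n with hN
  have hEO : pT s (2 * N) = (∑ x ∈ Finset.range N, (2*(x:ℝ))^s)
      + (∑ x ∈ Finset.range N, (2*(x:ℝ)+1)^s) := by
    show (∑ k ∈ Finset.range (2*N), (k:ℝ)^s) = _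
    rw [sum_range_double (fun k => (k:ℝ)^s) N, Finset.sum_add_distrib]
    congr 1 <;> exact Finset.sum_congr rfl fun x _ => by push_cast; ring
  have hshift : (∑ x ∈ Finset.range N, (2*(x:ℝ)+2)^s)
      = (∑ x ∈ Finset.range N, (2*(x:ℝ))^s) + (2*(N:ℝ))^s := by
    have h1 : ∑ x ∈ Finset.range (N+1), (2*(x:ℝ))^s
        = (∑ x ∈ Finset.range N, (2*(x:ℝ)+2)^s) + (2*((0:ℕ):ℝ))^s := by
      rw [Finset.sum_range_succ']
      congr 1
      exact Finset.sum_congr rfl fun x _ => by push_cast; ring_nf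
    have h2 : ∑ x ∈ Finset.range (N+1), (2*(x:ℝ))^s
        = (∑ x ∈ Finset.range N, (2*(x:ℝ))^s) + (2*(N:ℝ))^s := by
      rw [Finset.sum_range_succ]
    rw [h1] at h2
    rw [Nat.cast_zero, mul_zero, zero_pow hs0] at h2
    linarith
  have hE : (∑ x ∈ Finset.range N, (2*(x:ℝ))^s) = 2^s * pT s N := by
    rw [pT, Finset.mul_sum]
    exact Finset.sum_congr rfl fun x _ => by rw [mul_pow]
  have hO : (∑ x ∈ Finset.range N, (2*(x:ℝ)+1)^s) = pT s (2*N) - 2^s * pT s N := by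
    rw [hEO, hE]; ring
  have hsum : (∑ x ∈ Finset.range N,
      ((2 * (x : ℝ) + 2) ^ s - 2 * (2 * (x : ℝ) + 1) ^ s + (2 * (x : ℝ)) ^ s))
      = 4 * 2^s * pT s N - 2 * pT s (2*N) + 2^s * (N:ℝ)^s := by
    rw [Finset.sum_add_distrib, Finset.sum_sub_distrib, hshift, hE,
      ← Finset.mul_sum, hO, mul_pow]
    ring
  have h2N : 2 * N = 2 ^ (n+1) := by rw [hN]; ring
  have hNr : ((N:ℕ) : ℝ) = 2 ^ n := by rw [hN]; push_cast; ring
  rw [← Finset.sum_div, hsum, h2N, hNr, vA, vA, ← h2N]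
  have e1 : ((2:ℝ)) ^ ((n+1)*(s+1)) = 2^(n*s) * 2^n * 2^s * 2 := by
    have h : (n+1)*(s+1) = n*s + n + s + 1 := by ring
    rw [h, pow_add, pow_add, pow_add, pow_one]
  have e2 : ((2:ℝ)) ^ (n*(s+1)) = 2^(n*s) * 2^n := by
    have h : n*(s+1) = n*s + n := by ring
    rw [h, pow_add]
  have e3 : ((2:ℝ)^n)^s = 2^(n*s) := by rw [← pow_mul]
  have e4 : ((1:ℝ)/2)^n = 1/2^n := by rw [div_pow, one_pow]
  have e5 : ((1:ℝ)/2)^(n+1) = 1/(2^n * 2) := by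
    rw [div_pow, one_pow, pow_succ]
  rw [e1, e2, e3, e4, e5]
  have p1 : (0:ℝ) < 2^(n*s) := by positivity
  have p2 : (0:ℝ) < 2^n := by positivity
  have p3 : (0:ℝ) < 2^s := by positivity
  field_simp
  ring

private lemma vA_lim (s : ℕ) (hs : 1 ≤ s) :
    Tendsto (vA s) atTop (𝓝 (2 / ((s:ℝ) + 1))) := by
  have hsp : (0:ℝ) < (s : ℝ) + 1 := by positivity
  have hw : Tendsto (fun n : ℕ => pT s (2^n) / 2^(n*(s+1))) atTop
      (𝓝 (1/((s:ℝ)+1))) := by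
    have hub : ∀ n : ℕ, pT s (2^n) / 2^(n*(s+1)) ≤ 1/((s:ℝ)+1) := by
      intro n
      have h := sum_pow_le s (2^n)
      have hc : ((2^n : ℕ) : ℝ) = 2^n := by push_cast; ring
      rw [hc, show ((2:ℝ)^n)^(s+1) = 2^(n*(s+1)) from by rw [← pow_mul]] at h
      rw [div_le_div_iff₀ (by positivity) hsp]
      calc pT s (2^n) * ((s:ℝ)+1) ≤ (2:ℝ)^(n*(s+1))/((s:ℝ)+1) * ((s:ℝ)+1) :=
            mul_le_mul_of_nonneg_right h (le_of_lt hsp)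
        _ = 1 * 2^(n*(s+1)) := by field_simp
    have hlb : ∀ n : ℕ, 1/((s:ℝ)+1) - (1/2:ℝ)^n ≤ pT s (2^n) / 2^(n*(s+1)) := by
      intro n
      have h := le_sum_pow s (2^n)
      have hc : ((2^n : ℕ) : ℝ) = 2^n := by push_cast; ring
      rw [hc, show ((2:ℝ)^n)^(s+1) = 2^(n*(s+1)) from by rw [← pow_mul],
        show ((2:ℝ)^n)^s = 2^(n*s) from by rw [← pow_mul]] at h
      have hsplit : ((2:ℝ)) ^ (n*(s+1)) = 2^(n*s) * 2^n := by
        have hh : n*(s+1) = n*s + n := by ring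
        rw [hh, pow_add]
      have p1 : (0:ℝ) < 2^(n*s) := by positivity
      have p2 : (0:ℝ) < 2^n := by positivity
      have e4 : ((1:ℝ)/2)^n = 1/2^n := by rw [div_pow, one_pow]
      rw [e4, hsplit]
      rw [div_le_iff₀ hsp] at h
      rw [hsplit] at h
      rw [show (∑ k ∈ Finset.range (2^n), (k:ℝ)^s) = pT s (2^n) from rfl] at h
      have key2 : (2:ℝ)^(n*s) * 2^n - ((s:ℝ)+1) * 2^(n*s) ≤ pT s (2^n) * ((s:ℝ)+1) := by
        nlinarith
      rw [div_sub_div _ _ (ne_of_gt hsp) (ne_of_gt p2),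
        div_le_div_iff₀ (by positivity) (by positivity)]
      nlinarith [mul_le_mul_of_nonneg_right key2 (le_of_lt p2)]
    have hc1 : Tendsto (fun n : ℕ => 1/((s:ℝ)+1) - (1/2:ℝ)^n) atTop
        (𝓝 (1/((s:ℝ)+1))) := by
      have h0 := tendsto_pow_atTop_nhds_zero_of_lt_one
        (by norm_num : (0:ℝ) ≤ 1/2) (by norm_num : (1/2:ℝ) < 1)
      simpa using tendsto_const_nhds.sub h0
    exact tendsto_of_tendsto_of_tendsto_of_le_of_le hc1 tendsto_const_nhds hlb hub
  have h2 : Tendsto (fun n : ℕ => (1/2:ℝ)^n) atTop (𝓝 0) :=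
    tendsto_pow_atTop_nhds_zero_of_lt_one (by norm_num) (by norm_num)
  have := (hw.const_mul 2).add h2
  have heq : 2 * (1/((s:ℝ)+1)) + 0 = 2/((s:ℝ)+1) := by ring
  rw [heq] at this
  exact this

theorem exhaustion_general_power (s : ℕ) (hs : 1 ≤ s) :
    HasSum (fun n : ℕ => ∑ x ∈ Finset.range (2 ^ n),
        ((2 * (x : ℝ) + 2) ^ s - 2 * (2 * (x : ℝ) + 1) ^ s + (2 * (x : ℝ)) ^ s)
          / 2 ^ ((n + 1) * (s + 1)))
      (1 - 2 * ∫ t in (0:ℝ)..1, t ^ s) ∧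
    1 - 2 * (∫ t in (0:ℝ)..1, t ^ s) = ((s : ℝ) - 1) / ((s : ℝ) + 1) := by
  have hs0 : s ≠ 0 := by omega
  have hsp : (0:ℝ) < (s : ℝ) + 1 := by positivity
  have hint : (∫ t in (0:ℝ)..1, t ^ s) = 1 / ((s:ℝ) + 1) := by
    rw [integral_pow, zero_pow (by omega : s + 1 ≠ 0)]
    norm_num
  refine ⟨?_, by rw [hint]; field_simp; ring⟩
  rw [hint]
  have hterm : ∀ x : ℕ, 0 ≤ (2 * (x : ℝ) + 2) ^ s - 2 * (2 * (x : ℝ) + 1) ^ s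
      + (2 * (x : ℝ)) ^ s := by
    intro x
    have hconv := (convexOn_pow (𝕜 := ℝ) s).2
      (Set.mem_Ici.2 (by positivity : (0:ℝ) ≤ 2*(x:ℝ)))
      (Set.mem_Ici.2 (by positivity : (0:ℝ) ≤ 2*(x:ℝ)+2))
      (by norm_num : (0:ℝ) ≤ 1/2) (by norm_num : (0:ℝ) ≤ 1/2) (by norm_num)
    simp only [smul_eq_mul] at hconv
    rw [show (1/2:ℝ) * (2*(x:ℝ)) + (1/2:ℝ) * (2*(x:ℝ)+2) = 2*(x:ℝ)+1 by ring]
      at hconv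
    linarith
  have hnonneg : ∀ n : ℕ, 0 ≤ ∑ x ∈ Finset.range (2 ^ n),
      ((2 * (x : ℝ) + 2) ^ s - 2 * (2 * (x : ℝ) + 1) ^ s + (2 * (x : ℝ)) ^ s)
        / 2 ^ ((n + 1) * (s + 1)) :=
    fun n => Finset.sum_nonneg fun x _ => div_nonneg (hterm x) (by positivity)
  have hpartial : ∀ M : ℕ, (∑ n ∈ Finset.range M, ∑ x ∈ Finset.range (2 ^ n),
      ((2 * (x : ℝ) + 2) ^ s - 2 * (2 * (x : ℝ) + 1) ^ s + (2 * (x : ℝ)) ^ s)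
        / 2 ^ ((n + 1) * (s + 1))) = vA s 0 - vA s M := by
    intro M
    rw [Finset.sum_congr rfl fun n _ => key_identity s hs n,
      Finset.sum_range_sub' (vA s) M]
  have hv0 : vA s 0 = 1 := by
    simp [vA, pT, zero_pow hs0]
  rw [hasSum_iff_tendsto_nat_of_nonneg hnonneg]
  have hlim : Tendsto (fun M : ℕ => vA s 0 - vA s M) atTop
      (𝓝 (vA s 0 - 2/((s:ℝ)+1))) := tendsto_const_nhds.sub (vA_lim s hs)
  rw [hv0] at hlim
  simp only [hpartial, hv0]
  rw [show (1:ℝ) - 2 * (1/((s:ℝ)+1)) = 1 - 2/((s:ℝ)+1) by ring]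
  exact hlim
end

section
/- The series ∑_{n=1}^∞ 2^{−5(n−1)} ∑_{x=0}^{2^{n−1}−1} (2x + 3/8) converges and its sum equals 10/21. -/
theorem triangle_entry_s4_j3 :
    HasSum (fun n : ℕ => (1 / 2 ^ (5 * n) : ℝ) *
        ∑ x ∈ Finset.range (2 ^ n), (2 * (x : ℝ) + 3 / 8))
      (10 / 21) := by
  have h : (fun n : ℕ => (1 / 2 ^ (5 * n) : ℝ) *
        ∑ x ∈ Finset.range (2 ^ n), (2 * (x : ℝ) + 3 / 8))
      = fun n => (1/8:ℝ)^n - (5/8) * (1/16)^n := by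
    funext n
    have hsum : ∑ x ∈ Finset.range (2^n), (x:ℝ) = (2^n : ℝ) * ((2^n : ℝ) - 1) / 2 := by
      have hnat := Finset.sum_range_id_mul_two (2^n)
      have h2 : ((∑ i ∈ Finset.range (2^n), i : ℕ) : ℝ) * 2 = (2^n : ℝ) * ((2^n : ℝ) - 1) := by
        have := congrArg (Nat.cast (R := ℝ)) hnat
        push_cast [Nat.cast_sub (Nat.one_le_two_pow)] at this
        push_cast
        linarith
      push_cast at h2
      linarith
    rw [Finset.sum_add_distrib, ← Finset.mul_sum, hsum, Finset.sum_const, Finset.card_range]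
    have e1 : (2:ℝ)^(5*n) = 8^n * 4^n := by
      rw [pow_mul]; rw [show ((2:ℝ)^5) = 8*4 by norm_num, mul_pow]
    have e2 : ((2:ℝ)^n)^2 = 4^n := by rw [← pow_mul, pow_mul']; norm_num
    have h8 : (8:ℝ)^n ≠ 0 := by positivity
    have h4 : (4:ℝ)^n ≠ 0 := by positivity
    have h2 : (2:ℝ)^n ≠ 0 := by positivity
    have e3 : (1/8:ℝ)^n = 1/8^n := by rw [div_pow]; norm_num
    have e4 : (1/16:ℝ)^n = 1/(8^n * 2^n) := by
      rw [div_pow, one_pow, show ((16:ℝ)^n) = 8^n * 2^n by rw [← mul_pow]; norm_num]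
    have e5 : (4:ℝ)^n = 2^n * 2^n := by rw [← mul_pow]; norm_num
    rw [e1, e3, e4]
    field_simp
    rw [e5]
    ring
  rw [h]
  have g1 : HasSum (fun n : ℕ => (1/8:ℝ)^n) (8/7) := by
    have := hasSum_geometric_of_lt_one (r := (1/8:ℝ)) (by norm_num) (by norm_num)
    have e : ((1 - 1/8 : ℝ))⁻¹ = 8/7 := by norm_num
    rwa [e] at this
  have g2 : HasSum (fun n : ℕ => (5/8:ℝ) * (1/16)^n) (2/3) := by
    have := (hasSum_geometric_of_lt_one (r := (1/16:ℝ)) (by norm_num) (by norm_num)).mul_left (5/8)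
    have e : (5/8 : ℝ) * (1 - 1/16)⁻¹ = 2/3 := by norm_num
    rwa [e] at this
  have hfin := g1.sub g2
  have e : (8/7 - 2/3 : ℝ) = 10/21 := by norm_num
  rwa [e] at hfin
end
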